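/- On ℝ⁵ with coordinates (x₁,...,x₅), the vector fields R₁ = ∂₂, R₂ = x₁∂₂ + ∂₃, R₃ = (x₁²/2)∂₂ + x₁∂₃ + ∂₄ pairwise commute, are Lie symmetries of the Goursat distribution D = ⟨∂₅, x₅∂₄ + x₄∂₃ + x₃∂₂ + ∂₁⟩, and D ⊕ ⟨R₁,R₂,R₃⟩ = Tℝ⁵ at every point. -/

import Mathlib

noncomputable def lieBracket {n : ℕ} (X Y : (Fin n → ℝ) → (Fin n → ℝ)) :
    (Fin n → ℝ) → (Fin n → ℝ) :=
  fun p => fderiv ℝ Y p (X p) - fderiv ℝ X p (Y p)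

/- The class-2 Goursat distribution `D = ⟨∂₅, x₅∂₄ + x₄∂₃ + x₃∂₂ + ∂₁⟩` on `ℝ⁵`. -/
noncomputable def X1 : (Fin 5 → ℝ) → (Fin 5 → ℝ) := fun _ => ![0, 0, 0, 0, 1]
noncomputable def X2 : (Fin 5 → ℝ) → (Fin 5 → ℝ) := fun p => ![1, p 2, p 3, p 4, 0]

noncomputable def D (p : Fin 5 → ℝ) : Submodule ℝ (Fin 5 → ℝ) :=
  Submodule.span ℝ {X1 p, X2 p}

def IsLieSymmetry (S : (Fin 5 → ℝ) → (Fin 5 → ℝ)) : Prop :=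
  ∀ X : (Fin 5 → ℝ) → (Fin 5 → ℝ), ContDiff ℝ (⊤ : ℕ∞) X → (∀ p, X p ∈ D p) →
    ∀ p, lieBracket S X p ∈ D p

noncomputable def R1 : (Fin 5 → ℝ) → (Fin 5 → ℝ) := fun _ => ![0, 1, 0, 0, 0]
noncomputable def R2 : (Fin 5 → ℝ) → (Fin 5 → ℝ) := fun p => ![0, p 0, 1, 0, 0]
noncomputable def R3 : (Fin 5 → ℝ) → (Fin 5 → ℝ) := fun p => ![0, (p 0)^2 / 2, p 0, 1, 0]


noncomputable def pr (i : Fin 5) : (Fin 5 → ℝ) →L[ℝ] ℝ := ContinuousLinearMap.proj i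

noncomputable def L2' : (Fin 5 → ℝ) →L[ℝ] (Fin 5 → ℝ) :=
  ContinuousLinearMap.pi ![0, pr 0, 0, 0, 0]

noncomputable def L3' (p : Fin 5 → ℝ) : (Fin 5 → ℝ) →L[ℝ] (Fin 5 → ℝ) :=
  ContinuousLinearMap.pi ![0, p 0 • pr 0, pr 0, 0, 0]

lemma L2'_apply (w : Fin 5 → ℝ) : L2' w = ![0, w 0, 0, 0, 0] := by
  funext i; fin_cases i
  all_goals simp [L2', pr]

lemma L3'_apply (p w : Fin 5 → ℝ) : L3' p w = ![0, p 0 * w 0, w 0, 0, 0] := by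
  funext i; fin_cases i
  all_goals simp [L3', pr]

lemma hasFDerivAt_R1 (p : Fin 5 → ℝ) : HasFDerivAt R1 (0 : (Fin 5 → ℝ) →L[ℝ] (Fin 5 → ℝ)) p :=
  hasFDerivAt_const _ _

lemma hasFDerivAt_R2 (p : Fin 5 → ℝ) : HasFDerivAt R2 L2' p := by
  rw [hasFDerivAt_pi']
  intro i
  fin_cases i <;> simp only [R2, Matrix.cons_val_zero, Matrix.cons_val_one, Matrix.head_cons,
    Matrix.cons_val_two, Matrix.tail_cons, Matrix.cons_val_three, Matrix.cons_val_four,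
    Fin.isValue]
  · exact (hasFDerivAt_const _ _).congr_fderiv (by ext w; simp [L2', pr])
  · exact (hasFDerivAt_apply 0 p).congr_fderiv (by ext w; simp [L2', pr])
  · exact (hasFDerivAt_const _ _).congr_fderiv (by ext w; simp [L2', pr])
  · exact (hasFDerivAt_const _ _).congr_fderiv (by ext w; simp [L2', pr])
  · exact (hasFDerivAt_const _ _).congr_fderiv (by ext w; simp [L2', pr])

lemma hasFDerivAt_R3 (p : Fin 5 → ℝ) : HasFDerivAt R3 (L3' p) p := by
  rw [hasFDerivAt_pi']
  intro i
  fin_cases i <;> simp only [R3, Matrix.cons_val_zero, Matrix.cons_val_one, Matrix.head_cons,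
    Matrix.cons_val_two, Matrix.tail_cons, Matrix.cons_val_three, Matrix.cons_val_four,
    Fin.isValue]
  · exact (hasFDerivAt_const _ _).congr_fderiv (by ext w; simp [L3', pr])
  · have ha : HasFDerivAt (fun q : Fin 5 → ℝ => q 0)
        (ContinuousLinearMap.proj 0 : (Fin 5 → ℝ) →L[ℝ] ℝ) p := hasFDerivAt_apply 0 p
    have h := (ha.mul ha).const_mul (2 : ℝ)⁻¹
    have heq : (fun x : Fin 5 → ℝ => x 0 ^ 2 / 2) =
        fun x : Fin 5 → ℝ => (2 : ℝ)⁻¹ * (x 0 * x 0) := by funext x; ring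
    have h2 : HasFDerivAt (fun x : Fin 5 → ℝ => x 0 ^ 2 / 2)
        ((2 : ℝ)⁻¹ • (p 0 • (ContinuousLinearMap.proj 0 : (Fin 5 → ℝ) →L[ℝ] ℝ)
          + p 0 • ContinuousLinearMap.proj 0)) p := by rw [heq]; exact h
    exact h2.congr_fderiv (by ext w; simp [L3', pr]; ring)
  · exact (hasFDerivAt_apply 0 p).congr_fderiv (by ext w; simp [L3', pr])
  · exact (hasFDerivAt_const _ _).congr_fderiv (by ext w; simp [L3', pr])
  · exact (hasFDerivAt_const _ _).congr_fderiv (by ext w; simp [L3', pr])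

lemma mem_D_of (p v : Fin 5 → ℝ) (h1 : v 1 = v 0 * p 2) (h2 : v 2 = v 0 * p 3)
    (h3 : v 3 = v 0 * p 4) : v ∈ D p := by
  rw [D, Submodule.mem_span_pair]
  refine ⟨v 4, v 0, ?_⟩
  funext i
  fin_cases i <;> simp [X1, X2, h1, h2, h3, mul_comm]

lemma D_comps (q v : Fin 5 → ℝ) (h : v ∈ D q) :
    v 1 = v 0 * q 2 ∧ v 2 = v 0 * q 3 ∧ v 3 = v 0 * q 4 := by
  rw [D, Submodule.mem_span_pair] at h
  obtain ⟨a, b, h⟩ := h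
  have h0 := congrFun h 0
  have h1 := congrFun h 1
  have h2 := congrFun h 2
  have h3 := congrFun h 3
  simp [X1, X2] at h0 h1 h2 h3
  exact ⟨by rw [← h0, ← h1], by rw [← h0, ← h2], by rw [← h0, ← h3]⟩

open ContinuousLinearMap in
lemma key (X : (Fin 5 → ℝ) → (Fin 5 → ℝ)) (hX : ContDiff ℝ (⊤ : ℕ∞) X)
    (hD : ∀ p, X p ∈ D p) (p v : Fin 5 → ℝ) (i j : Fin 5)
    (hij : ∀ q, X q i = X q 0 * q j) :
    fderiv ℝ X p v i = fderiv ℝ X p v 0 * p j + X p 0 * v j := by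
  have hA : HasFDerivAt X (fderiv ℝ X p) p :=
    ((hX.differentiable (by simp)) p).hasFDerivAt
  set A := fderiv ℝ X p with hAdef
  have hi : HasFDerivAt (fun q => X q i) ((proj i).comp A) p :=
    ((hasFDerivAt_apply i (X p)).comp p hA :)
  have h0 : HasFDerivAt (fun q => X q 0) ((proj 0).comp A) p :=
    ((hasFDerivAt_apply 0 (X p)).comp p hA :)
  have hj : HasFDerivAt (fun q : Fin 5 → ℝ => q j)
      (proj j : (Fin 5 → ℝ) →L[ℝ] ℝ) p := hasFDerivAt_apply j p
  have hprod := h0.mul hj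
  have hsub := hi.sub hprod
  have hzero : (fun q => X q i - X q 0 * q j) = fun _ => (0 : ℝ) :=
    funext fun q => by rw [hij q]; ring
  have hz : HasFDerivAt (fun q => X q i - X q 0 * q j) (0 : (Fin 5 → ℝ) →L[ℝ] ℝ) p := by
    rw [hzero]; exact hasFDerivAt_const _ _
  have := hsub.unique hz
  have hv := DFunLike.congr_fun this v
  simp at hv
  linarith [hv]

theorem goursat_class2_three_contact :
    lieBracket R1 R2 = 0 ∧ lieBracket R1 R3 = 0 ∧ lieBracket R2 R3 = 0 ∧
    IsLieSymmetry R1 ∧ IsLieSymmetry R2 ∧ IsLieSymmetry R3 ∧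
    ∀ p : Fin 5 → ℝ,
      D p ⊔ Submodule.span ℝ {R1 p, R2 p, R3 p} = ⊤ ∧
      D p ⊓ Submodule.span ℝ {R1 p, R2 p, R3 p} = ⊥ := by
  have fR1 : ∀ p : Fin 5 → ℝ, fderiv ℝ R1 p = 0 := fun p => (hasFDerivAt_R1 p).fderiv
  have fR2 : ∀ p : Fin 5 → ℝ, fderiv ℝ R2 p = L2' := fun p => (hasFDerivAt_R2 p).fderiv
  have fR3 : ∀ p : Fin 5 → ℝ, fderiv ℝ R3 p = L3' p := fun p => (hasFDerivAt_R3 p).fderiv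
  refine ⟨?_, ?_, ?_, ?_, ?_, ?_, ?_⟩
  · funext p i
    show (fderiv ℝ R2 p (R1 p) - fderiv ℝ R1 p (R2 p)) i = 0
    rw [fR1, fR2, L2'_apply]
    fin_cases i
    all_goals simp [R1]
  · funext p i
    show (fderiv ℝ R3 p (R1 p) - fderiv ℝ R1 p (R3 p)) i = 0
    rw [fR1, fR3, L3'_apply]
    fin_cases i
    all_goals simp [R1]
  · funext p i
    show (fderiv ℝ R3 p (R2 p) - fderiv ℝ R2 p (R3 p)) i = 0
    rw [fR2, fR3, L3'_apply, L2'_apply]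
    fin_cases i
    all_goals simp [R2, R3]
  · intro X hX hDX p
    have hc := fun q => D_comps q (X q) (hDX q)
    have k1 := key X hX hDX p (R1 p) 1 2 (fun q => (hc q).1)
    have k2 := key X hX hDX p (R1 p) 2 3 (fun q => (hc q).2.1)
    have k3 := key X hX hDX p (R1 p) 3 4 (fun q => (hc q).2.2)
    refine mem_D_of p _ ?_ ?_ ?_
    all_goals simp only [lieBracket, fR1, ContinuousLinearMap.zero_apply, sub_zero]
    all_goals simp [R1] at k1 k2 k3 ⊢
    all_goals linarith [k1, k2, k3]
  · intro X hX hDX p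
    have hc := fun q => D_comps q (X q) (hDX q)
    have k1 := key X hX hDX p (R2 p) 1 2 (fun q => (hc q).1)
    have k2 := key X hX hDX p (R2 p) 2 3 (fun q => (hc q).2.1)
    have k3 := key X hX hDX p (R2 p) 3 4 (fun q => (hc q).2.2)
    refine mem_D_of p _ ?_ ?_ ?_
    all_goals simp only [lieBracket, fR2, L2'_apply, Pi.sub_apply]
    all_goals simp [R2] at k1 k2 k3 ⊢
    all_goals linarith [k1, k2, k3]
  · intro X hX hDX p
    have hc := fun q => D_comps q (X q) (hDX q)
    have k1 := key X hX hDX p (R3 p) 1 2 (fun q => (hc q).1)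
    have k2 := key X hX hDX p (R3 p) 2 3 (fun q => (hc q).2.1)
    have k3 := key X hX hDX p (R3 p) 3 4 (fun q => (hc q).2.2)
    refine mem_D_of p _ ?_ ?_ ?_
    all_goals simp only [lieBracket, fR3, L3'_apply, Pi.sub_apply]
    all_goals simp [R3] at k1 k2 k3 ⊢
    all_goals linarith [k1, k2, k3]
  · intro p
    constructor
    · have mu : X2 p ∈ D p ⊔ Submodule.span ℝ {R1 p, R2 p, R3 p} :=
        Submodule.mem_sup_left (Submodule.subset_span (by simp))
      have m4 : X1 p ∈ D p ⊔ Submodule.span ℝ {R1 p, R2 p, R3 p} :=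
        Submodule.mem_sup_left (Submodule.subset_span (by simp))
      have m1 : R1 p ∈ D p ⊔ Submodule.span ℝ {R1 p, R2 p, R3 p} :=
        Submodule.mem_sup_right (Submodule.subset_span (by simp))
      have m2 : R2 p ∈ D p ⊔ Submodule.span ℝ {R1 p, R2 p, R3 p} :=
        Submodule.mem_sup_right (Submodule.subset_span (by simp))
      have m3 : R3 p ∈ D p ⊔ Submodule.span ℝ {R1 p, R2 p, R3 p} :=
        Submodule.mem_sup_right (Submodule.subset_span (by simp))
      have he2 : R2 p - p 0 • R1 p ∈ D p ⊔ Submodule.span ℝ {R1 p, R2 p, R3 p} :=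
        sub_mem m2 (Submodule.smul_mem _ _ m1)
      have he3 : R3 p - p 0 • (R2 p - p 0 • R1 p) - (p 0 ^ 2 / 2) • R1 p ∈
          D p ⊔ Submodule.span ℝ {R1 p, R2 p, R3 p} :=
        sub_mem (sub_mem m3 (Submodule.smul_mem _ _ he2)) (Submodule.smul_mem _ _ m1)
      have he0 : X2 p - p 2 • R1 p - p 3 • (R2 p - p 0 • R1 p) -
          p 4 • (R3 p - p 0 • (R2 p - p 0 • R1 p) - (p 0 ^ 2 / 2) • R1 p) ∈
          D p ⊔ Submodule.span ℝ {R1 p, R2 p, R3 p} :=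
        sub_mem (sub_mem (sub_mem mu (Submodule.smul_mem _ _ m1))
          (Submodule.smul_mem _ _ he2)) (Submodule.smul_mem _ _ he3)
      rw [eq_top_iff]
      intro v _
      have hv : v = v 0 • (X2 p - p 2 • R1 p - p 3 • (R2 p - p 0 • R1 p) -
            p 4 • (R3 p - p 0 • (R2 p - p 0 • R1 p) - (p 0 ^ 2 / 2) • R1 p)) +
          v 1 • R1 p + v 2 • (R2 p - p 0 • R1 p) +
          v 3 • (R3 p - p 0 • (R2 p - p 0 • R1 p) - (p 0 ^ 2 / 2) • R1 p) +
          v 4 • X1 p := by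
        funext i
        fin_cases i
        all_goals simp [X1, X2, R1, R2, R3]
        all_goals ring
      rw [hv]
      exact add_mem (add_mem (add_mem (add_mem (Submodule.smul_mem _ _ he0)
        (Submodule.smul_mem _ _ m1)) (Submodule.smul_mem _ _ he2))
        (Submodule.smul_mem _ _ he3)) (Submodule.smul_mem _ _ m4)
    · rw [eq_bot_iff]
      intro v hv
      obtain ⟨hvD, hvR⟩ := Submodule.mem_inf.1 hv
      rw [Submodule.mem_span_insert] at hvR
      obtain ⟨a, z, hz, rfl⟩ := hvR
      rw [Submodule.mem_span_insert] at hz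
      obtain ⟨b, w, hw, rfl⟩ := hz
      rw [Submodule.mem_span_singleton] at hw
      obtain ⟨c, rfl⟩ := hw
      rw [D, Submodule.mem_span_pair] at hvD
      obtain ⟨s, t, hst⟩ := hvD
      have h0 := congrFun hst 0
      have h4 := congrFun hst 4
      simp [X1, X2, R1, R2, R3] at h0 h4
      rw [Submodule.mem_bot, ← hst]
      funext i
      fin_cases i
      all_goals simp [X1, X2, h0, h4]
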